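/- Let β > 0 and c ≥ 0. Then ∫_ℝ f_{β,c}(t) dt = 1; equivalently, (4/(πβ))·∫_a^b (1/t)·sqrt((t²−a²)(b²−t²)) dt = 1. -/

import Mathlib

open MeasureTheory Real Filter Topology

/-- Left endpoint `a` of the support. -/
noncomputable def endA (β c : ℝ) : ℝ :=
  Real.sqrt (β / 2) * Real.sqrt (1 + 2 * c / β - Real.sqrt (1 + 4 * c / β))

/-- Right endpoint `b` of the support. -/
noncomputable def endB (β c : ℝ) : ℝ :=
  Real.sqrt (β / 2) * Real.sqrt (1 + 2 * c / β + Real.sqrt (1 + 4 * c / β))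

/-- The support `S = [−b,−a] ∪ [a,b]`. -/
def suppS (β c : ℝ) : Set ℝ :=
  Set.Icc (-(endB β c)) (-(endA β c)) ∪ Set.Icc (endA β c) (endB β c)

/-- The density `f_{β,c}` of the equilibrium measure `ν_{β,c}`. -/
noncomputable def densf (β c t : ℝ) : ℝ :=
  (suppS β c).indicator (fun t =>
    (2 / (Real.pi * β)) * (1 / |t|) *
      Real.sqrt ((t ^ 2 - endA β c ^ 2) * (endB β c ^ 2 - t ^ 2))) t

/-!
For `0 ≤ a < b` the integrand `t⁻¹ √((t² - a²)(b² - t²))` has the elementary primitive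
`½ [√((t² - a²)(b² - t²)) + (a² + b²)/2 · arcsin v(t) - a b · arcsin w(t)]`, with
`v = (2t² - a² - b²)/(b² - a²)` and `w = ((a² + b²)t² - 2a²b²)/(t²(b² - a²))` both running
from `-1` to `1` on `[a, b]` (for `a = 0` the last term vanishes); hence
`∫ₐᵇ = π (b - a)² / 4`. The endpoints satisfy `a² + b² = β + 2c` and `ab = c`, so
`(b - a)² = β`, and the density, being even, integrates to `2 · 2/(πβ) · πβ/4 = 1`.
-/

open Set

noncomputable def invMulSqrtPrimitive (a b t : ℝ) : ℝ :=
  (√((t ^ 2 - a ^ 2) * (b ^ 2 - t ^ 2))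
    + (a ^ 2 + b ^ 2) / 2 * arcsin ((2 * t ^ 2 - a ^ 2 - b ^ 2) / (b ^ 2 - a ^ 2))
    - a * b * arcsin (((a ^ 2 + b ^ 2) * t ^ 2 - 2 * a ^ 2 * b ^ 2) / (t ^ 2 * (b ^ 2 - a ^ 2))))
    / 2

section Primitive

variable {a b t : ℝ}

lemma sq_sub_sq_mul_sq_sub_sq_pos (ha : 0 ≤ a) (hat : a < t) (htb : t < b) :
    0 < (t ^ 2 - a ^ 2) * (b ^ 2 - t ^ 2) :=
  mul_pos (by nlinarith) (by nlinarith)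

lemma hasDerivAt_sqrt_sq_sub_sq_mul_sq_sub_sq (ha : 0 ≤ a) (hat : a < t) (htb : t < b) :
    HasDerivAt (fun x => √((x ^ 2 - a ^ 2) * (b ^ 2 - x ^ 2)))
      (t * (a ^ 2 + b ^ 2 - 2 * t ^ 2) / √((t ^ 2 - a ^ 2) * (b ^ 2 - t ^ 2))) t := by
  have hu := sq_sub_sq_mul_sq_sub_sq_pos ha hat htb
  have h := hasDerivAt_pow 2 t
  have hpoly : HasDerivAt (fun x => (x ^ 2 - a ^ 2) * (b ^ 2 - x ^ 2))
      (2 * t * (b ^ 2 - t ^ 2) - (t ^ 2 - a ^ 2) * (2 * t)) t := by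
    refine ((h.sub_const (a ^ 2)).mul (h.const_sub (b ^ 2))).congr_deriv ?_
    push_cast
    ring
  refine (hpoly.sqrt hu.ne').congr_deriv ?_
  field_simp
  ring

lemma hasDerivAt_arcsin_two_mul_sq_sub_div (ha : 0 ≤ a) (hat : a < t) (htb : t < b) :
    HasDerivAt (fun x => arcsin ((2 * x ^ 2 - a ^ 2 - b ^ 2) / (b ^ 2 - a ^ 2)))
      (2 * t / √((t ^ 2 - a ^ 2) * (b ^ 2 - t ^ 2))) t := by
  have hu := sq_sub_sq_mul_sq_sub_sq_pos ha hat htb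
  have hba : 0 < b ^ 2 - a ^ 2 := by nlinarith
  set s := √((t ^ 2 - a ^ 2) * (b ^ 2 - t ^ 2)) with hs
  have hv := ((((hasDerivAt_pow 2 t).const_mul 2).sub_const (a ^ 2)).sub_const (b ^ 2)).div_const
    (b ^ 2 - a ^ 2)
  have hv1 : -1 < (2 * t ^ 2 - a ^ 2 - b ^ 2) / (b ^ 2 - a ^ 2) := by
    rw [lt_div_iff₀ hba]; nlinarith
  have hv2 : (2 * t ^ 2 - a ^ 2 - b ^ 2) / (b ^ 2 - a ^ 2) < 1 := by
    rw [div_lt_one hba]; nlinarith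
  have hsqrt : √(1 - ((2 * t ^ 2 - a ^ 2 - b ^ 2) / (b ^ 2 - a ^ 2)) ^ 2)
      = 2 * s / (b ^ 2 - a ^ 2) := by
    have h : 1 - ((2 * t ^ 2 - a ^ 2 - b ^ 2) / (b ^ 2 - a ^ 2)) ^ 2
        = (2 * s / (b ^ 2 - a ^ 2)) ^ 2 := by
      rw [div_pow, div_pow, mul_pow, hs, sq_sqrt hu.le]
      field_simp
      ring
    rw [h, sqrt_sq (by positivity)]
  refine ((hasDerivAt_arcsin hv1.ne' hv2.ne).comp t hv).congr_deriv ?_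
  rw [hsqrt]
  field_simp
  push_cast
  ring

lemma hasDerivAt_mul_arcsin_div_sq (ha : 0 ≤ a) (hat : a < t) (htb : t < b) :
    HasDerivAt
      (fun x => a * b *
        arcsin (((a ^ 2 + b ^ 2) * x ^ 2 - 2 * a ^ 2 * b ^ 2) / (x ^ 2 * (b ^ 2 - a ^ 2))))
      (2 * a ^ 2 * b ^ 2 / (t * √((t ^ 2 - a ^ 2) * (b ^ 2 - t ^ 2)))) t := by
  rcases ha.eq_or_lt with rfl | ha
  · simpa using hasDerivAt_const t (0 : ℝ)
  have hu := sq_sub_sq_mul_sq_sub_sq_pos ha.le hat htb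
  have ht : 0 < t := ha.trans hat
  have hb : 0 < b := ht.trans htb
  have hba : 0 < b ^ 2 - a ^ 2 := by nlinarith
  have hden : 0 < t ^ 2 * (b ^ 2 - a ^ 2) := by positivity
  set s := √((t ^ 2 - a ^ 2) * (b ^ 2 - t ^ 2)) with hs
  have h := hasDerivAt_pow 2 t
  have hw := ((h.const_mul (a ^ 2 + b ^ 2)).sub_const (2 * a ^ 2 * b ^ 2)).div
    (h.mul_const (b ^ 2 - a ^ 2)) hden.ne'
  have hw1 : -1 < ((a ^ 2 + b ^ 2) * t ^ 2 - 2 * a ^ 2 * b ^ 2) / (t ^ 2 * (b ^ 2 - a ^ 2)) := by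
    rw [lt_div_iff₀ hden]
    nlinarith [mul_pos (pow_pos hb 2) (show 0 < t ^ 2 - a ^ 2 by nlinarith)]
  have hw2 : ((a ^ 2 + b ^ 2) * t ^ 2 - 2 * a ^ 2 * b ^ 2) / (t ^ 2 * (b ^ 2 - a ^ 2)) < 1 := by
    rw [div_lt_one hden]
    nlinarith [mul_pos (pow_pos ha 2) (show 0 < b ^ 2 - t ^ 2 by nlinarith)]
  have hsqrt :
      √(1 - (((a ^ 2 + b ^ 2) * t ^ 2 - 2 * a ^ 2 * b ^ 2) / (t ^ 2 * (b ^ 2 - a ^ 2))) ^ 2)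
      = 2 * a * b * s / (t ^ 2 * (b ^ 2 - a ^ 2)) := by
    have h : 1 - (((a ^ 2 + b ^ 2) * t ^ 2 - 2 * a ^ 2 * b ^ 2) / (t ^ 2 * (b ^ 2 - a ^ 2))) ^ 2
        = (2 * a * b * s / (t ^ 2 * (b ^ 2 - a ^ 2))) ^ 2 := by
      rw [div_pow, div_pow, mul_pow (2 * a * b), hs, sq_sqrt hu.le]
      field_simp
      ring
    rw [h, sqrt_sq (by positivity)]
  refine (((hasDerivAt_arcsin hw1.ne' hw2.ne).comp t hw).const_mul (a * b)).congr_deriv ?_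
  rw [hsqrt]
  field_simp
  push_cast
  ring

lemma hasDerivAt_invMulSqrtPrimitive (ha : 0 ≤ a) (hat : a < t) (htb : t < b) :
    HasDerivAt (invMulSqrtPrimitive a b) (1 / t * √((t ^ 2 - a ^ 2) * (b ^ 2 - t ^ 2))) t := by
  have hu := sq_sub_sq_mul_sq_sub_sq_pos ha hat htb
  refine ((((hasDerivAt_sqrt_sq_sub_sq_mul_sq_sub_sq ha hat htb).add
    ((hasDerivAt_arcsin_two_mul_sq_sub_div ha hat htb).const_mul ((a ^ 2 + b ^ 2) / 2))).sub
    (hasDerivAt_mul_arcsin_div_sq ha hat htb)).div_const 2).congr_deriv ?_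
  field_simp
  rw [sq_sqrt hu.le]
  ring

lemma continuousOn_invMulSqrtPrimitive (ha : 0 ≤ a) (hab : a < b) :
    ContinuousOn (invMulSqrtPrimitive a b) (Icc a b) := by
  have hw : ContinuousOn (fun t => a * b *
      arcsin (((a ^ 2 + b ^ 2) * t ^ 2 - 2 * a ^ 2 * b ^ 2) / (t ^ 2 * (b ^ 2 - a ^ 2))))
      (Icc a b) := by
    rcases ha.eq_or_lt with rfl | ha
    · simpa using continuousOn_const
    refine continuousOn_const.mul (continuous_arcsin.comp_continuousOn ?_)
    refine (by fun_prop : Continuous _).continuousOn.div (by fun_prop) fun t ht => ?_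
    have : 0 < t := ha.trans_le ht.1
    have : 0 < b ^ 2 - a ^ 2 := by nlinarith
    positivity
  unfold invMulSqrtPrimitive
  fun_prop (disch := assumption)

lemma invMulSqrtPrimitive_sub (ha : 0 ≤ a) (hab : a < b) :
    invMulSqrtPrimitive a b b - invMulSqrtPrimitive a b a = π * (b - a) ^ 2 / 4 := by
  have hb : 0 < b := ha.trans_lt hab
  have hba : 0 < b ^ 2 - a ^ 2 := by nlinarith
  have hva : (2 * a ^ 2 - a ^ 2 - b ^ 2) / (b ^ 2 - a ^ 2) = -1 := by
    field_simp; ring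
  have hvb : (2 * b ^ 2 - a ^ 2 - b ^ 2) / (b ^ 2 - a ^ 2) = 1 := by
    field_simp; ring
  have hwb : ((a ^ 2 + b ^ 2) * b ^ 2 - 2 * a ^ 2 * b ^ 2) / (b ^ 2 * (b ^ 2 - a ^ 2)) = 1 := by
    field_simp; ring
  have hwa :
      a * b * arcsin (((a ^ 2 + b ^ 2) * a ^ 2 - 2 * a ^ 2 * b ^ 2) / (a ^ 2 * (b ^ 2 - a ^ 2)))
      = a * b * -(π / 2) := by
    rcases ha.eq_or_lt with rfl | ha
    · simp
    rw [← arcsin_neg_one]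
    congr 2
    field_simp
    ring
  simp only [invMulSqrtPrimitive, hva, hvb, hwa, hwb, arcsin_one, arcsin_neg_one, sub_self,
    mul_zero, zero_mul, sqrt_zero]
  ring

lemma intervalIntegrable_inv_mul_sqrt (ha : 0 ≤ a) (hab : a < b) :
    IntervalIntegrable (fun t => 1 / t * √((t ^ 2 - a ^ 2) * (b ^ 2 - t ^ 2))) volume a b :=
  (intervalIntegrable_iff_integrableOn_Ioc_of_le hab.le).2 <|
    intervalIntegral.integrableOn_deriv_of_nonneg (continuousOn_invMulSqrtPrimitive ha hab)
      (fun _ ht => hasDerivAt_invMulSqrtPrimitive ha ht.1 ht.2)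
      fun _ ht => mul_nonneg (one_div_nonneg.2 (ha.trans ht.1.le)) (sqrt_nonneg _)

theorem integral_inv_mul_sqrt (ha : 0 ≤ a) (hab : a < b) :
    ∫ t in a..b, 1 / t * √((t ^ 2 - a ^ 2) * (b ^ 2 - t ^ 2)) = π * (b - a) ^ 2 / 4 := by
  rw [intervalIntegral.integral_eq_sub_of_hasDerivAt_of_le hab.le
    (continuousOn_invMulSqrtPrimitive ha hab)
    (fun _ ht => hasDerivAt_invMulSqrtPrimitive ha ht.1 ht.2)
    (intervalIntegrable_inv_mul_sqrt ha hab),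
    invMulSqrtPrimitive_sub ha hab]

end Primitive

lemma setIntegral_Icc_neg_union_Icc_of_even {g : ℝ → ℝ} (hg : ∀ t, g (-t) = g t) {a b : ℝ}
    (ha : 0 ≤ a) (hab : a ≤ b) (hint : IntervalIntegrable g volume a b) :
    ∫ t in Icc (-b) (-a) ∪ Icc a b, g t = 2 * ∫ t in a..b, g t := by
  have hint' : IntervalIntegrable g volume (-b) (-a) := by
    simpa only [hg] using ((IntervalIntegrable.iff_comp_neg (f := g)).1 hint).symm
  have hdisj : AEDisjoint volume (Icc (-b) (-a)) (Icc a b) := by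
    refine measure_mono_null (fun x ⟨⟨_, h₁⟩, h₂, _⟩ => ?_) (volume_singleton (a := (0 : ℝ)))
    exact le_antisymm (by linarith) (by linarith)
  rw [setIntegral_union₀ hdisj measurableSet_Icc.nullMeasurableSet
      ((intervalIntegrable_iff_integrableOn_Icc_of_le (by linarith)).1 hint')
      ((intervalIntegrable_iff_integrableOn_Icc_of_le hab).1 hint),
    integral_Icc_eq_integral_Ioc, integral_Icc_eq_integral_Ioc,
    ← intervalIntegral.integral_of_le (by linarith), ← intervalIntegral.integral_of_le hab,
    ← intervalIntegral.integral_comp_neg]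
  simp only [hg]
  ring

section Endpoints

variable {β c : ℝ}

lemma sqrt_one_add_four_mul_div_le (hβ : 0 < β) (hc : 0 ≤ c) :
    √(1 + 4 * c / β) ≤ 1 + 2 * c / β := by
  have : 0 ≤ c / β := div_nonneg hc hβ.le
  rw [mul_div_assoc, mul_div_assoc, sqrt_le_left (by linarith)]
  nlinarith

lemma endA_sq (hβ : 0 < β) (hc : 0 ≤ c) :
    endA β c ^ 2 = β / 2 * (1 + 2 * c / β - √(1 + 4 * c / β)) := by
  rw [endA, mul_pow, sq_sqrt (by positivity),
    sq_sqrt (sub_nonneg.2 (sqrt_one_add_four_mul_div_le hβ hc))]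

lemma endB_sq (hβ : 0 < β) (hc : 0 ≤ c) :
    endB β c ^ 2 = β / 2 * (1 + 2 * c / β + √(1 + 4 * c / β)) := by
  rw [endB, mul_pow, sq_sqrt (by positivity), sq_sqrt (by positivity)]

lemma endA_nonneg : 0 ≤ endA β c := by
  unfold endA; positivity

lemma endA_le_endB : endA β c ≤ endB β c := by
  unfold endA endB
  gcongr
  linarith [sqrt_nonneg (1 + 4 * c / β)]

lemma endA_mul_endB (hβ : 0 < β) (hc : 0 ≤ c) : endA β c * endB β c = c := by
  refine (pow_left_inj₀ (mul_nonneg endA_nonneg (endA_nonneg.trans endA_le_endB)) hc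
    two_ne_zero).1 ?_
  rw [mul_pow, endA_sq hβ hc, endB_sq hβ hc, ← mul_mul_mul_comm, mul_comm (1 + 2 * c / β - _),
    ← sq_sub_sq, sq_sqrt (by positivity)]
  field_simp
  ring

lemma endB_sub_endA_sq (hβ : 0 < β) (hc : 0 ≤ c) : (endB β c - endA β c) ^ 2 = β := by
  have hsum : endA β c ^ 2 + endB β c ^ 2 = β + 2 * c := by
    rw [endA_sq hβ hc, endB_sq hβ hc]; field_simp; ring
  linear_combination hsum - 2 * endA_mul_endB hβ hc

lemma endA_lt_endB (hβ : 0 < β) (hc : 0 ≤ c) : endA β c < endB β c := by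
  refine endA_le_endB.lt_of_ne fun h => hβ.ne ?_
  rw [← endB_sub_endA_sq hβ hc, h, sub_self, zero_pow two_ne_zero]

end Endpoints

theorem stmt_17 (β c : ℝ) (hβ : 0 < β) (hc : 0 ≤ c) :
    (∫ t : ℝ, densf β c t) = 1 ∧
    (4 / (Real.pi * β)) *
      (∫ t in (endA β c)..(endB β c),
        (1 / t) * Real.sqrt ((t ^ 2 - endA β c ^ 2) * (endB β c ^ 2 - t ^ 2))) = 1 := by
  have ha : 0 ≤ endA β c := endA_nonneg
  have hab : endA β c < endB β c := endA_lt_endB hβ hc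
  have hI := integral_inv_mul_sqrt ha hab
  rw [endB_sub_endA_sq hβ hc] at hI
  refine ⟨?_, by rw [hI]; field_simp⟩
  unfold densf
  set a := endA β c
  set b := endB β c
  set g : ℝ → ℝ := fun t => 2 / (π * β) * (1 / |t|) * √((t ^ 2 - a ^ 2) * (b ^ 2 - t ^ 2))
  have hg : EqOn g (fun t => 2 / (π * β) * (1 / t * √((t ^ 2 - a ^ 2) * (b ^ 2 - t ^ 2))))
      (uIcc a b) := fun t ht => by
    rw [uIcc_of_le hab.le] at ht
    simp only [g, abs_of_nonneg (ha.trans ht.1)]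
    ring
  have hint : IntervalIntegrable g volume a b :=
    ((intervalIntegrable_inv_mul_sqrt ha hab).const_mul _).congr
      (hg.symm.mono uIoc_subset_uIcc)
  rw [suppS, integral_indicator (measurableSet_Icc.union measurableSet_Icc),
    setIntegral_Icc_neg_union_Icc_of_even (by simp [g]) ha hab.le hint,
    intervalIntegral.integral_congr hg, intervalIntegral.integral_const_mul, hI]
  field_simp
  ring
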